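/- arXiv:2604.03958 — 8 statements merged into one kernel-verified Lean document; each statement's English description precedes it below -/
import Mathlib

section
/- Let G and H be real symmetric positive definite n×n matrices and write M = (G+H)⁻¹G. Then every eigenvalue of M (viewed as a complex matrix) is a real number lying in the open interval (0,1); in particular the spectral radius of M satisfies ρ(M) < 1. -/
/-!
If `M x = μ x` with `x ≠ 0`, then `G x = μ (G + H) x`, and pairing with `x` gives
`xᴴ G x = μ (xᴴ G x + xᴴ H x)`. The complexification of a real positive definite matrix is
positive definite, so both quadratic forms are positive reals `a, b`, and
`μ = a / (a + b) ∈ (0, 1)`.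
-/

open scoped MatrixOrder ComplexOrder ENNReal

namespace Matrix

variable {n : Type*} [Fintype n]

theorem map_nonsing_inv {R S : Type*} [CommRing R] [CommRing S] [DecidableEq n] (f : R →+* S)
    {A : Matrix n n R} (hA : IsUnit A.det) : A⁻¹.map f = (A.map f)⁻¹ :=
  (inv_eq_left_inv <| by
    rw [← Matrix.map_mul, nonsing_inv_mul A hA, Matrix.map_one f f.map_zero f.map_one]).symm

theorem PosDef.map_ofReal {A : Matrix n n ℝ} (hA : A.PosDef) :
    (A.map ((↑) : ℝ → ℂ)).PosDef := by
  classical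
  obtain ⟨B, rfl⟩ := CStarAlgebra.nonneg_iff_eq_star_mul_self.mp hA.posSemidef.nonneg
  have hmap : (star B * B).map ((↑) : ℝ → ℂ) = (B.map (↑))ᴴ * B.map (↑) := by
    rw [star_eq_conjTranspose, ← conjTranspose_map _ fun _ ↦ (Complex.conj_ofReal _).symm]
    exact Matrix.map_mul (f := Complex.ofRealHom)
  have hdet : ((star B * B).map ((↑) : ℝ → ℂ)).det ≠ 0 := fun h0 ↦
    hA.det_pos.ne' (Complex.ofReal_eq_zero.mp ((Complex.ofRealHom.map_det _).trans h0))
  rw [hmap] at hdet ⊢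
  exact ((posSemidef_conjTranspose_mul_self _).posDef_iff_det_ne_zero).mpr hdet

variable {𝕜 : Type*} [RCLike 𝕜]

theorem PosDef.eq_real_mem_Ioo_of_mulVec_eq_smul_add_mulVec {A B : Matrix n n 𝕜}
    (hA : A.PosDef) (hB : B.PosDef) {x : n → 𝕜} (hx : x ≠ 0) {μ : 𝕜}
    (h : A *ᵥ x = μ • ((A + B) *ᵥ x)) :
    ∃ t : ℝ, μ = t ∧ 0 < t ∧ t < 1 := by
  obtain ⟨a, ha, hAx⟩ := RCLike.pos_iff_exists_ofReal.mp (hA.dotProduct_mulVec_pos hx)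
  obtain ⟨b, hb, hBx⟩ := RCLike.pos_iff_exists_ofReal.mp (hB.dotProduct_mulVec_pos hx)
  have hab : (a : 𝕜) = μ * (a + b) := by
    rw [hAx, hBx, ← dotProduct_add, ← add_mulVec, ← smul_eq_mul, ← dotProduct_smul, ← h]
  refine ⟨a / (a + b), ?_, by positivity, (div_lt_one (by positivity)).mpr (by linarith)⟩
  have : (a : 𝕜) + b ≠ 0 := by exact_mod_cast (by positivity : a + b ≠ 0)
  push_cast
  exact (eq_div_iff this).mpr hab.symm

theorem PosDef.eq_real_mem_Ioo_of_mem_spectrum_inv_add_mul [DecidableEq n] {A B : Matrix n n 𝕜}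
    (hA : A.PosDef) (hB : B.PosDef) :
    ∀ μ ∈ spectrum 𝕜 ((A + B)⁻¹ * A), ∃ t : ℝ, μ = t ∧ 0 < t ∧ t < 1 := by
  intro μ hμ
  rw [← spectrum_toLin', ← Module.End.hasEigenvalue_iff_mem_spectrum] at hμ
  obtain ⟨x, hx⟩ := hμ.exists_hasEigenvector
  have hMx : ((A + B)⁻¹ * A) *ᵥ x = μ • x := Module.End.mem_eigenspace_iff.mp hx.1
  have hAB : IsUnit (A + B).det := isUnit_iff_ne_zero.mpr (hA.add hB).det_pos.ne'
  refine hA.eq_real_mem_Ioo_of_mulVec_eq_smul_add_mulVec hB hx.2 ?_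
  calc A *ᵥ x = (A + B) *ᵥ (((A + B)⁻¹ * A) *ᵥ x) := by
        rw [mulVec_mulVec, ← mul_assoc, mul_nonsing_inv _ hAB, one_mul]
    _ = μ • ((A + B) *ᵥ x) := by rw [hMx, mulVec_smul]

end Matrix

theorem spectralRadius_lt_of_forall_lt_of_finite {𝕜 A : Type*} [NormedField 𝕜] [Ring A]
    [Algebra 𝕜 A] {a : A} (hfin : (spectrum 𝕜 a).Finite) {r : ℝ≥0∞} (hr : 0 < r)
    (h : ∀ k ∈ spectrum 𝕜 a, (‖k‖₊ : ℝ≥0∞) < r) : spectralRadius 𝕜 a < r := by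
  rw [spectralRadius, ← hfin.coe_toFinset]
  simp only [Finset.mem_coe, ← Finset.sup_eq_iSup]
  exact (Finset.sup_lt_iff hr).mpr (by simpa using h)

/-- Every eigenvalue of `M = (G+H)⁻¹G` (as a complex matrix) is a real number in `(0,1)`,
and the spectral radius of `M` is less than `1`. -/
theorem stmt0 {n : ℕ} (G H : Matrix (Fin n) (Fin n) ℝ)
    (hG : G.PosDef) (hH : H.PosDef) :
    (∀ μ ∈ spectrum ℂ (((G + H)⁻¹ * G).map (Complex.ofReal)),
      ∃ t : ℝ, μ = (t : ℂ) ∧ 0 < t ∧ t < 1) ∧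
    spectralRadius ℂ (((G + H)⁻¹ * G).map (Complex.ofReal)) < 1 := by
  have hGH : IsUnit (G + H).det := isUnit_iff_ne_zero.mpr (hG.add hH).det_pos.ne'
  have hM : ((G + H)⁻¹ * G).map Complex.ofReal
      = (G.map Complex.ofReal + H.map Complex.ofReal)⁻¹ * G.map Complex.ofReal := by
    change ((G + H)⁻¹ * G).map Complex.ofRealHom = _
    rw [Matrix.map_mul, Matrix.map_nonsing_inv _ hGH, Matrix.map_add _ (map_add _)]
    rfl
  rw [hM]
  have hspec := hG.map_ofReal.eq_real_mem_Ioo_of_mem_spectrum_inv_add_mul hH.map_ofReal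
  refine ⟨hspec, spectralRadius_lt_of_forall_lt_of_finite (Matrix.finite_spectrum _) one_pos
    fun μ hμ ↦ ?_⟩
  obtain ⟨t, rfl, ht0, ht1⟩ := hspec μ hμ
  have : ‖(t : ℂ)‖ < 1 := by rwa [Complex.norm_real, Real.norm_of_nonneg ht0.le]
  exact ENNReal.coe_lt_one_iff.mpr (NNReal.coe_lt_one.mp this)
end

section
/- Let G and H be real symmetric positive definite n×n matrices and let r be a natural number. Then the matrix φ = (I − ((G+H)⁻¹G)^{r+1}) H⁻¹ is symmetric, i.e. φᵀ = φ. -/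
/-!
Write `S = G + H` and `X = S⁻¹ G`. Since `G = S - H`, the product `X H⁻¹ = H⁻¹ - S⁻¹` is symmetric,
i.e. `X H⁻¹ = H⁻¹ Xᵀ`. Pushing `H⁻¹` through a power of `X` then gives `X ^ k H⁻¹ = H⁻¹ (Xᵀ) ^ k`,
so every `X ^ k H⁻¹`, and hence `(1 - X ^ k) H⁻¹`, is symmetric.
-/

open Matrix

namespace Matrix

variable {n R : Type*} [Fintype n] [DecidableEq n]

theorem inv_mul_sub_mul_inv [CommRing R] {A B : Matrix n n R} (hA : IsUnit A) (hB : IsUnit B) :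
    A⁻¹ * (A - B) * B⁻¹ = B⁻¹ - A⁻¹ := by
  rw [mul_sub, sub_mul, nonsing_inv_mul _ ((isUnit_iff_isUnit_det A).1 hA), one_mul, mul_assoc,
    mul_nonsing_inv _ ((isUnit_iff_isUnit_det B).1 hB), mul_one]

theorem IsSymm.pow_mul [CommSemiring R] {X P : Matrix n n R} (hP : P.IsSymm)
    (hXP : (X * P).IsSymm) (k : ℕ) : (X ^ k * P).IsSymm := by
  have hsemiconj : SemiconjBy P Xᵀ X := by
    rw [SemiconjBy, ← hXP.eq, transpose_mul, hP.eq]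
  rw [IsSymm, transpose_mul, transpose_pow, hP.eq, (hsemiconj.pow_right k).eq]

theorem IsSymm.one_sub_pow_mul [CommRing R] {X P : Matrix n n R} (hP : P.IsSymm)
    (hXP : (X * P).IsSymm) (k : ℕ) : ((1 - X ^ k) * P).IsSymm := by
  rw [sub_mul, one_mul]
  exact hP.sub (hP.pow_mul hXP k)

end Matrix

/-- The matrix `φ = (I − ((G+H)⁻¹G)^{r+1}) H⁻¹` is symmetric. -/
theorem stmt1 {n : ℕ} (G H : Matrix (Fin n) (Fin n) ℝ)
    (hG : G.PosDef) (hH : H.PosDef) (r : ℕ) :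
    ((1 - ((G + H)⁻¹ * G) ^ (r + 1)) * H⁻¹)ᵀ
      = (1 - ((G + H)⁻¹ * G) ^ (r + 1)) * H⁻¹ := by
  have hS : (G + H).PosDef := hG.add hH
  have hHinv : H⁻¹.IsSymm := isHermitian_iff_isSymm.1 hH.isHermitian.inv
  have hSinv : (G + H)⁻¹.IsSymm := isHermitian_iff_isSymm.1 hS.isHermitian.inv
  have hXP : ((G + H)⁻¹ * G * H⁻¹).IsSymm := by
    have h := inv_mul_sub_mul_inv hS.isUnit hH.isUnit
    rw [add_sub_cancel_right] at h
    rw [h]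
    exact hHinv.sub hSinv
  exact (hHinv.one_sub_pow_mul hXP (r + 1)).eq
end

section
/- Let G and H be real symmetric positive definite n×n matrices and let r be a natural number. Then ((I + G⁻¹H)⁻¹)^{r+1} H⁻¹ = H⁻¹ (G(G+H)⁻¹)^{r+1}. -/
/-!
Since `1 + G⁻¹H = G⁻¹(G + H)`, the left-hand factor is `(G + H)⁻¹G`. Both `G H⁻¹ (G + H)` and
`(G + H) H⁻¹ G` equal `G + G H⁻¹ G`, so `H⁻¹` intertwines `(G + H)⁻¹G` with `G(G + H)⁻¹`, and hence
also their powers.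
-/

open Matrix

namespace Matrix

variable {ι α : Type*} [Fintype ι] [DecidableEq ι] [CommRing α] {G H : Matrix ι ι α}

theorem inv_one_add_inv_mul (hG : IsUnit G.det) : (1 + G⁻¹ * H)⁻¹ = (G + H)⁻¹ * G := by
  rw [← nonsing_inv_mul G hG, ← mul_add, mul_inv_rev, nonsing_inv_nonsing_inv G hG]

theorem add_inv_mul_mul_inv_comm (hH : IsUnit H.det) (hGH : IsUnit (G + H).det) :
    (G + H)⁻¹ * G * H⁻¹ = H⁻¹ * (G * (G + H)⁻¹) := by
  have hcomm : G * H⁻¹ * (G + H) = (G + H) * (H⁻¹ * G) := by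
    rw [mul_add, add_mul, mul_assoc G H⁻¹ H, nonsing_inv_mul H hH, mul_one,
      ← mul_assoc H H⁻¹ G, mul_nonsing_inv H hH, one_mul, mul_assoc]
  calc (G + H)⁻¹ * G * H⁻¹
      = (G + H)⁻¹ * (G * H⁻¹ * (G + H)) * (G + H)⁻¹ := by
        simp only [mul_assoc, mul_nonsing_inv _ hGH, mul_one]
    _ = H⁻¹ * (G * (G + H)⁻¹) := by
        rw [hcomm, ← mul_assoc, nonsing_inv_mul _ hGH, one_mul, mul_assoc]

theorem add_inv_mul_pow_mul_inv_comm (hH : IsUnit H.det) (hGH : IsUnit (G + H).det) (k : ℕ) :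
    ((G + H)⁻¹ * G) ^ k * H⁻¹ = H⁻¹ * (G * (G + H)⁻¹) ^ k :=
  (SemiconjBy.pow_right (add_inv_mul_mul_inv_comm hH hGH).symm k).symm

end Matrix

/-- `((I + G⁻¹H)⁻¹)^{r+1} H⁻¹ = H⁻¹ (G(G+H)⁻¹)^{r+1}`. -/
theorem stmt3 {n : ℕ} (G H : Matrix (Fin n) (Fin n) ℝ)
    (hG : G.PosDef) (hH : H.PosDef) (r : ℕ) :
    ((1 + G⁻¹ * H)⁻¹) ^ (r + 1) * H⁻¹ = H⁻¹ * (G * (G + H)⁻¹) ^ (r + 1) := by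
  have isUnit_det {M : Matrix (Fin n) (Fin n) ℝ} (hM : M.PosDef) : IsUnit M.det :=
    (isUnit_iff_isUnit_det M).1 hM.isUnit
  rw [inv_one_add_inv_mul (isUnit_det hG)]
  exact add_inv_mul_pow_mul_inv_comm (isUnit_det hH) (isUnit_det (hG.add hH)) (r + 1)
end

section
/- Let G and H be real symmetric positive definite n×n matrices, write M = (G+H)⁻¹G, and let g ∈ ℝⁿ. Define the sequence of vectors d⁰ = (G+H)⁻¹g and dˡ = (G+H)⁻¹(g + G dˡ⁻¹) for l ≥ 1. Then for every natural number r, dʳ = (I − M^{r+1}) H⁻¹ g. -/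
open Matrix

/-! Since `1 - M = (G+H)⁻¹H`, the starting vector is `(G+H)⁻¹g = (1 - M)H⁻¹g` and the recursion reads
`dˡ⁺¹ = (1 - M)H⁻¹g + M dˡ`; unrolling it sums a geometric series in `M`, which telescopes to
`(1 - M^{r+1})H⁻¹g`. -/

namespace Matrix

variable {m R : Type*} [Fintype m] [DecidableEq m] [CommRing R]

theorem eq_one_sub_pow_succ_mulVec_of_recursion (M : Matrix m m R) (v : m → R)
    (d : ℕ → m → R) (h0 : d 0 = (1 - M) *ᵥ v)
    (hs : ∀ l, d (l + 1) = (1 - M) *ᵥ v + M *ᵥ d l) (r : ℕ) :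
    d r = (1 - M ^ (r + 1)) *ᵥ v := by
  induction r with
  | zero => rw [h0, pow_one]
  | succ l ih =>
    rw [hs, ih, mulVec_mulVec, ← add_mulVec, Matrix.mul_sub, Matrix.mul_one, ← pow_succ']
    abel_nf

theorem inv_add_eq_one_sub_inv_add_mul_mul_inv (G H : Matrix m m R)
    (hGH : IsUnit (G + H).det) (hH : IsUnit H.det) :
    (G + H)⁻¹ = (1 - (G + H)⁻¹ * G) * H⁻¹ := by
  rw [← nonsing_inv_mul _ hGH, ← Matrix.mul_sub, add_sub_cancel_left, Matrix.mul_assoc,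
    mul_nonsing_inv _ hH, Matrix.mul_one]

end Matrix

/-- The inner loop of the OCP iteration: `d⁰ = (G+H)⁻¹g`,
`dˡ = (G+H)⁻¹(g + G dˡ⁻¹)`, satisfies `dʳ = (I − M^{r+1}) H⁻¹ g` with `M = (G+H)⁻¹G`. -/
theorem stmt5 {n : ℕ} (G H : Matrix (Fin n) (Fin n) ℝ)
    (hG : G.PosDef) (hH : H.PosDef) (g : Fin n → ℝ)
    (d : ℕ → Fin n → ℝ)
    (hd0 : d 0 = (G + H)⁻¹ *ᵥ g)
    (hds : ∀ l : ℕ, d (l + 1) = (G + H)⁻¹ *ᵥ (g + G *ᵥ d l)) :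
    ∀ r : ℕ, d r = ((1 - ((G + H)⁻¹ * G) ^ (r + 1)) * H⁻¹) *ᵥ g := by
  intro r
  have hstart : (G + H)⁻¹ *ᵥ g = (1 - (G + H)⁻¹ * G) *ᵥ (H⁻¹ *ᵥ g) := by
    rw [mulVec_mulVec, ← inv_add_eq_one_sub_inv_add_mul_mul_inv G H
      (hG.add hH).det_pos.ne'.isUnit hH.det_pos.ne'.isUnit]
  rw [← mulVec_mulVec]
  refine eq_one_sub_pow_succ_mulVec_of_recursion _ _ d (hd0.trans hstart) (fun l => ?_) r
  rw [hds, mulVec_add, hstart, mulVec_mulVec (d l)]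
end

section
/- Let G and H be real symmetric positive definite n×n matrices and write M = (G+H)⁻¹G. There exists a constant c > 0 such that for every natural number r and every vector v ∈ ℝⁿ, ‖Mʳ v‖ ≤ c · ρ(M)ʳ · ‖v‖, where ‖·‖ is the Euclidean norm and ρ(M) is the spectral radius of M. -/
/-!
Write `A = G + H`. Since `A` is positive definite it factors as `A = B* B` with `B` invertible,
and then `M = A⁻¹ G = B⁻¹ (B*⁻¹ G B⁻¹) B` is similar to the self-adjoint matrix `N = B*⁻¹ G B⁻¹`.
For self-adjoint `N` the operator norm equals the spectral radius, so
`‖Mʳ‖ = ‖B⁻¹ Nʳ B‖ ≤ ‖B⁻¹‖ ‖B‖ ‖N‖ʳ = ‖B⁻¹‖ ‖B‖ ρ(M)ʳ`.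
Only the C⋆-identity is used, so the estimate holds in any C⋆-algebra; for matrices one passes
to the complexification, whose `ℓ²` operator norm bounds `‖Mʳ v‖ / ‖v‖`.
-/

open Matrix

/-- The Euclidean norm on `ℝⁿ`. -/
noncomputable def eucNorm {n : ℕ} (v : Fin n → ℝ) : ℝ := Real.sqrt (∑ i, v i ^ 2)

section CStarAlgebra

variable {A : Type*} [CStarAlgebra A]

lemma IsSelfAdjoint.norm_pow_units_conj_le {b : A} (hb : IsSelfAdjoint b) (u : Aˣ) (r : ℕ) :
    ‖(↑u⁻¹ * b * ↑u) ^ r‖ ≤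
      ‖(↑u⁻¹ : A)‖ * ‖(u : A)‖ * (spectralRadius ℂ (↑u⁻¹ * b * ↑u)).toReal ^ r := by
  rw [spectralRadius, spectrum.units_conjugate', ← spectralRadius,
    hb.toReal_spectralRadius_complex_eq_norm, Units.conj_pow']
  rcases r with _ | r
  · simpa using norm_mul_le (↑u⁻¹ : A) u
  calc ‖↑u⁻¹ * b ^ (r + 1) * ↑u‖ ≤ ‖(↑u⁻¹ : A)‖ * ‖b ^ (r + 1)‖ * ‖(u : A)‖ := norm_mul₃_le
    _ ≤ ‖(↑u⁻¹ : A)‖ * ‖b‖ ^ (r + 1) * ‖(u : A)‖ := by gcongr; exact norm_pow_le' b r.succ_pos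
    _ = ‖(↑u⁻¹ : A)‖ * ‖(u : A)‖ * ‖b‖ ^ (r + 1) := by ring

lemma IsStrictlyPositive.exists_norm_pow_inverse_mul_le [PartialOrder A] [StarOrderedRing A]
    {a g : A} (ha : IsStrictlyPositive a) (hg : IsSelfAdjoint g) :
    ∃ C, 0 < C ∧ ∀ r : ℕ,
      ‖(Ring.inverse a * g) ^ r‖ ≤ C * (spectralRadius ℂ (Ring.inverse a * g)).toReal ^ r := by
  obtain ⟨b, hb, rfl⟩ := CStarAlgebra.isStrictlyPositive_iff_eq_star_mul_self.mp ha
  lift b to Aˣ using hb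
  have hconj : Ring.inverse (star (b : A) * b) * g =
      ↑b⁻¹ * (star (↑b⁻¹ : A) * g * ↑b⁻¹) * ↑b := by
    rw [← Units.coe_star, ← Units.val_mul, Ring.inverse_unit, _root_.mul_inv_rev, Units.val_mul,
      Units.coe_star_inv]
    simp [mul_assoc]
  refine ⟨‖(↑b⁻¹ : A)‖ * ‖(b : A)‖ + 1, by positivity, fun r => ?_⟩
  rw [hconj]
  refine ((hg.conjugate' _).norm_pow_units_conj_le b r).trans ?_
  gcongr
  linarith

end CStarAlgebra

lemma Matrix.map_nonsing_inv_s7 {ι R S : Type*} [Fintype ι] [DecidableEq ι] [CommRing R]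
    [CommRing S] (f : R →+* S) {A : Matrix ι ι R} (hA : IsUnit A.det) :
    A⁻¹.map f = (A.map f)⁻¹ := by
  refine (inv_eq_right_inv ?_).symm
  rw [← f.mapMatrix_apply, ← f.mapMatrix_apply, ← map_mul, mul_nonsing_inv _ hA, map_one]

open scoped MatrixOrder ComplexOrder in
lemma Matrix.PosDef.map_ofReal_s7 {ι : Type*} [Fintype ι] [DecidableEq ι] {A : Matrix ι ι ℝ}
    (hA : A.PosDef) : (A.map Complex.ofReal).PosDef := by
  obtain ⟨B, hB, rfl⟩ :=
    CStarAlgebra.isStrictlyPositive_iff_eq_star_mul_self.mp hA.isStrictlyPositive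
  refine IsStrictlyPositive.posDef <| CStarAlgebra.isStrictlyPositive_iff_eq_star_mul_self.mpr
    ⟨Complex.ofRealHom.mapMatrix B, hB.map _, ?_⟩
  change Complex.ofRealHom.mapMatrix (star B * B) = _
  rw [map_mul]
  congr 1
  ext i j
  simp [star_eq_conjTranspose]

lemma eucNorm_eq_norm_toLp_ofReal {n : ℕ} (v : Fin n → ℝ) :
    eucNorm v = ‖WithLp.toLp 2 (fun i => (v i : ℂ))‖ := by
  simp [eucNorm, EuclideanSpace.norm_eq]

open scoped Matrix.Norms.L2Operator in
lemma eucNorm_mulVec_le {m n : ℕ} (P : Matrix (Fin m) (Fin n) ℝ) (v : Fin n → ℝ) :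
    eucNorm (P *ᵥ v) ≤ ‖P.map Complex.ofReal‖ * eucNorm v := by
  rw [eucNorm_eq_norm_toLp_ofReal, eucNorm_eq_norm_toLp_ofReal]
  convert l2_opNorm_mulVec (P.map Complex.ofReal) (WithLp.toLp 2 (fun i => (v i : ℂ))) using 3
  ext i
  simp [mulVec, dotProduct]

open scoped Matrix.Norms.L2Operator MatrixOrder ComplexOrder in
/-- There is `c > 0` with `‖Mʳ v‖ ≤ c ρ(M)ʳ ‖v‖` for all `r` and `v`, where
`M = (G+H)⁻¹G` and `ρ` is the spectral radius. -/
theorem stmt7 {n : ℕ} (G H : Matrix (Fin n) (Fin n) ℝ)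
    (hG : G.PosDef) (hH : H.PosDef) :
    ∃ c : ℝ, 0 < c ∧ ∀ (r : ℕ) (v : Fin n → ℝ),
      eucNorm ((((G + H)⁻¹ * G) ^ r) *ᵥ v) ≤
        c * (spectralRadius ℂ (((G + H)⁻¹ * G).map Complex.ofReal)).toReal ^ r
          * eucNorm v := by
  have hGH := hG.add hH
  have hM : ((G + H)⁻¹ * G).map Complex.ofReal =
      Ring.inverse ((G + H).map Complex.ofReal) * G.map Complex.ofReal := by
    rw [← nonsing_inv_eq_ringInverse]
    exact (Matrix.map_mul (f := Complex.ofRealHom)).trans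
      congr($(map_nonsing_inv_s7 Complex.ofRealHom hGH.det_pos.ne'.isUnit) * _)
  obtain ⟨C, hC, hbound⟩ := hGH.map_ofReal_s7.isStrictlyPositive.exists_norm_pow_inverse_mul_le
    hG.map_ofReal_s7.isHermitian.isSelfAdjoint
  refine ⟨C, hC, fun r v => ?_⟩
  calc eucNorm ((((G + H)⁻¹ * G) ^ r) *ᵥ v)
      ≤ ‖(((G + H)⁻¹ * G) ^ r).map Complex.ofReal‖ * eucNorm v := eucNorm_mulVec_le _ _
    _ = ‖(((G + H)⁻¹ * G).map Complex.ofReal) ^ r‖ * eucNorm v :=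
      congr(‖$(map_pow Complex.ofRealHom.mapMatrix _ r)‖ * _)
    _ ≤ _ := by
      rw [hM]
      exact mul_le_mul_of_nonneg_right (hbound r) (Real.sqrt_nonneg _)
end

section
/- Let G be a fixed real symmetric positive definite n×n matrix and let r be a natural number. Let H : ℝⁿ → ℝ^{n×n} be a matrix-valued map, differentiable at a point U* ∈ ℝⁿ, such that H(U) is symmetric positive definite for all U. Let g : ℝⁿ → ℝⁿ be differentiable at U* with g(U*) = 0 and with Fréchet derivative Dg(U*) given by multiplication by the matrix H(U*). Define v(U) = (I − ((G+H(U))⁻¹G)^{r+1}) H(U)⁻¹ g(U). Then v(U*) = 0 and the Fréchet derivative of v at U* is given by multiplication by the matrix I − ((G+H(U*))⁻¹G)^{r+1}. -/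
/-!
Write `v(U) = M(U) g(U)` with `M(U) = (I - ((G + H(U))⁻¹ G)^{r+1}) H(U)⁻¹`. Since `g` vanishes
at `U*`, the product rule needs only the continuity of `M` at `U*`, and the derivative of `M`
drops out: `Dv(U*) = M(U*) Dg(U*) = M(U*) H(U*) = I - ((G + H(U*))⁻¹ G)^{r+1}`.
-/

open Matrix Asymptotics Filter Topology

theorem HasFDerivAt.clm_apply_of_eq_zero {𝕜 E F G : Type*} [NontriviallyNormedField 𝕜]
    [NormedAddCommGroup E] [NormedSpace 𝕜 E] [NormedAddCommGroup F] [NormedSpace 𝕜 F]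
    [NormedAddCommGroup G] [NormedSpace 𝕜 G]
    {f : E → F →L[𝕜] G} {g : E → F} {L : E →L[𝕜] F} {x : E}
    (hf : ContinuousAt f x) (hg : HasFDerivAt g L x) (hgx : g x = 0) :
    HasFDerivAt (fun y => f y (g y)) ((f x).comp L) x := by
  -- As `g x = 0`, `f y (g y) - f x (L (y - x))` splits as
  -- `f y (g y - g x - L (y - x)) + (f y - f x) (L (y - x))`, and both terms are `o(y - x)`.
  have happly := isBoundedBilinearMap_apply (𝕜 := 𝕜) (E := F) (F := G)
  have hremainder : (fun y => f y (g y - g x - L (y - x))) =o[𝓝 x] fun y => y - x := by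
    refine (happly.isBigO_comp.trans_isLittleO ?_).of_norm_right
    simpa only [one_mul] using
      (hf.tendsto.isBigO_one ℝ).norm_left.mul_isLittleO hg.isLittleO.norm_norm
  have hvariation : (fun y => (f y - f x) (L (y - x))) =o[𝓝 x] fun y => y - x := by
    refine (happly.isBigO_comp.trans_isLittleO ?_).of_norm_right
    have hf_sub : (fun y => f y - f x) =o[𝓝 x] fun _ => (1 : ℝ) :=
      (isLittleO_one_iff ℝ).2 (tendsto_sub_nhds_zero_iff.2 hf)
    simpa only [one_mul] using hf_sub.norm_left.mul_isBigO (L.isBigO_comp _ _).norm_norm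
  refine hasFDerivAt_iff_isLittleO.2 <| (hremainder.add hvariation).congr_left fun y => ?_
  simp only [hgx, map_sub, map_zero, _root_.sub_apply, ContinuousLinearMap.comp_apply, sub_zero]
  abel

theorem HasFDerivAt.matrix_mulVec_of_eq_zero {𝕜 E m n : Type*} [NontriviallyNormedField 𝕜]
    [CompleteSpace 𝕜] [NormedAddCommGroup E] [NormedSpace 𝕜 E] [Fintype m] [Fintype n]
    {M : E → Matrix m n 𝕜} {g : E → n → 𝕜} {L : E →L[𝕜] n → 𝕜} {x : E}
    (hM : ContinuousAt M x) (hg : HasFDerivAt g L x) (hgx : g x = 0) :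
    HasFDerivAt (fun y => M y *ᵥ g y)
      ((LinearMap.toContinuousLinearMap (M x).mulVecLin).comp L) x := by
  have hM_clm : ContinuousAt (fun y => LinearMap.toContinuousLinearMap (M y).mulVecLin) x :=
    continuousAt_clm_apply.2 fun w =>
      (continuous_id.matrix_mulVec continuous_const).continuousAt.comp hM
  exact hg.clm_apply_of_eq_zero hM_clm hgx

theorem ContinuousAt.matrix_inv {X 𝕜 n : Type*} [TopologicalSpace X] [Field 𝕜]
    [TopologicalSpace 𝕜] [IsTopologicalDivisionRing 𝕜] [Fintype n] [DecidableEq n]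
    {A : X → Matrix n n 𝕜} {x : X} (hA : ContinuousAt A x) (hdet : (A x).det ≠ 0) :
    ContinuousAt (fun y => (A y)⁻¹) x := by
  have hinv : ContinuousAt Ring.inverse (A x).det := by
    simpa only [Ring.inverse_eq_inv'] using continuousAt_inv₀ hdet
  exact (continuousAt_matrix_inv _ hinv).comp hA

/-- If `g(U*) = 0` and `Dg(U*) = H(U*)·`, then
`v(U) = (I − ((G+H(U))⁻¹G)^{r+1}) H(U)⁻¹ g(U)` satisfies `v(U*) = 0` and its Fréchet
derivative at `U*` is multiplication by `I − ((G+H(U*))⁻¹G)^{r+1}`. -/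
theorem stmt9 {n : ℕ} (G : Matrix (Fin n) (Fin n) ℝ) (hG : G.PosDef) (r : ℕ)
    (H : (Fin n → ℝ) → Matrix (Fin n) (Fin n) ℝ) (Ustar : Fin n → ℝ)
    (hHdiff : ∀ i j, DifferentiableAt ℝ (fun U => H U i j) Ustar)
    (hHpd : ∀ U, (H U).PosDef)
    (g : (Fin n → ℝ) → Fin n → ℝ) (hg0 : g Ustar = 0)
    (Lg : (Fin n → ℝ) →L[ℝ] (Fin n → ℝ)) (hLg : ∀ w, Lg w = H Ustar *ᵥ w)
    (hg : HasFDerivAt g Lg Ustar)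
    (v : (Fin n → ℝ) → Fin n → ℝ)
    (hv : ∀ U, v U = ((1 - ((G + H U)⁻¹ * G) ^ (r + 1)) * (H U)⁻¹) *ᵥ g U) :
    v Ustar = 0 ∧
    ∃ Lv : (Fin n → ℝ) →L[ℝ] (Fin n → ℝ), HasFDerivAt v Lv Ustar ∧
      ∀ w, Lv w = (1 - ((G + H Ustar)⁻¹ * G) ^ (r + 1)) *ᵥ w := by
  have hH : ContinuousAt H Ustar :=
    continuousAt_pi.2 fun i => continuousAt_pi.2 fun j => (hHdiff i j).continuousAt
  have hdetH : (H Ustar).det ≠ 0 := (hHpd Ustar).det_pos.ne'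
  have hdetGH : (G + H Ustar).det ≠ 0 := (hG.add (hHpd Ustar)).det_pos.ne'
  have hM : ContinuousAt (fun U => (1 - ((G + H U)⁻¹ * G) ^ (r + 1)) * (H U)⁻¹) Ustar :=
    (continuousAt_const.sub
      ((((continuousAt_const.add hH).matrix_inv hdetGH).mul continuousAt_const).pow _)).mul
      (hH.matrix_inv hdetH)
  rw [show v = _ from funext hv]
  refine ⟨by simp only [hg0, mulVec_zero], _, hg.matrix_mulVec_of_eq_zero hM hg0, fun w => ?_⟩
  rw [ContinuousLinearMap.comp_apply, hLg, LinearMap.coe_toContinuousLinearMap', mulVecLin_apply,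
    mulVec_mulVec, mul_assoc, nonsing_inv_mul _ (isUnit_iff_ne_zero.2 hdetH), mul_one]
end

section
/- Let f : ℝᵖ × ℝᵐ → ℝᵖ be continuously differentiable, ℓ : ℝᵖ → ℝ and Φ : ℝᵖ → ℝ continuously differentiable, R a symmetric m×m real matrix, a ∈ ℝᵖ, and N a natural number. For a control sequence u = (u(0),…,u(N)) ∈ (ℝᵐ)^{N+1}, define the state trajectory by x(0) = a and x(k+1) = f(x(k),u(k)) for 0 ≤ k ≤ N, and the cost J(u) = Σ_{k=0}^{N} ( ℓ(x(k)) + ½ u(k)ᵀ R u(k) ) + Φ(x(N+1)). Define the costate sequence backward by λ(N+1) = ∇Φ(x(N+1)) and λ(k) = ∇ℓ(x(k)) + (∂f/∂x (x(k),u(k)))ᵀ λ(k+1) for 1 ≤ k ≤ N. Then for each 0 ≤ k ≤ N, the partial gradient of J with respect to the block variable u(k) equals R u(k) + (∂f/∂u (x(k),u(k)))ᵀ λ(k+1). -/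
open Matrix
open Fin.NatCast

/-- The state trajectory generated from initial state `a` by the control sequence
`u = (u(0),…,u(N))` through the dynamics `x(k+1) = f(x(k),u(k))`. -/
noncomputable def traj {p m N : ℕ} (f : (Fin p → ℝ) → (Fin m → ℝ) → Fin p → ℝ)
    (a : Fin p → ℝ) (u : Fin (N + 1) → Fin m → ℝ) : ℕ → Fin p → ℝ
  | 0 => a
  | k + 1 => f (traj f a u k) (u k)

/-- The cost `J(u) = Σ_{k=0}^{N} ( ℓ(x(k)) + ½ u(k)ᵀ R u(k) ) + Φ(x(N+1))`. -/
noncomputable def cost {p m N : ℕ} (f : (Fin p → ℝ) → (Fin m → ℝ) → Fin p → ℝ)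
    (ℓ : (Fin p → ℝ) → ℝ) (Φ : (Fin p → ℝ) → ℝ) (R : Matrix (Fin m) (Fin m) ℝ)
    (a : Fin p → ℝ) (u : Fin (N + 1) → Fin m → ℝ) : ℝ :=
  (∑ k ∈ Finset.range (N + 1),
    (ℓ (traj f a u k) + (1 / 2) * (u k ⬝ᵥ R *ᵥ u k))) + Φ (traj f a u (N + 1))

/-!
Freeze every control but `u(k) = z`. The cost splits into a constant, the penalty `½ zᵀ R z`,
and the cost-to-go `V_{k+1}` of the stages after `k` evaluated at `f(x(k), z)`. Along the
nominal trajectory, Bellman's recursion `V_j y = ℓ y + V_{j+1} (f y (u j))`, `V_{N+1} = Φ`,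
differentiated by the chain rule, is exactly the costate recursion, so by backward induction
`∇V_j (x(j)) = λ(j)` for `1 ≤ j ≤ N + 1`. One more chain rule through `z ↦ f(x(k), z)` gives the
partial gradient.
-/

section Quadratic

variable {n : Type*} [Fintype n] (R : Matrix n n ℝ)

theorem differentiable_dotProduct_mulVec_self :
    Differentiable ℝ (fun z : n → ℝ => z ⬝ᵥ R *ᵥ z) := by
  simp only [dotProduct, mulVec]
  fun_prop

theorem fderiv_dotProduct_mulVec_self_apply (v w : n → ℝ) :
    fderiv ℝ (fun z : n → ℝ => z ⬝ᵥ R *ᵥ z) v w = v ⬝ᵥ R *ᵥ w + w ⬝ᵥ R *ᵥ v := by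
  classical
  let B : (n → ℝ) →L[ℝ] (n → ℝ) →L[ℝ] ℝ := LinearMap.toContinuousLinearMap
    (LinearMap.toContinuousLinearMap.toLinearMap ∘ₗ Matrix.toLinearMap₂' ℝ R)
  have hB : ∀ x y, B x y = x ⬝ᵥ R *ᵥ y := fun x y => by simp [B, toLinearMap₂'_apply']
  have hderiv := B.fderiv_of_bilinear (differentiableAt_id (x := v)) differentiableAt_id
  simp only [hB, id] at hderiv
  simp [hderiv, hB, add_comm]

theorem fderiv_half_dotProduct_mulVec_self_apply {R : Matrix n n ℝ} (hR : Rᵀ = R) (v w : n → ℝ) :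
    fderiv ℝ (fun z : n → ℝ => (1 / 2 : ℝ) * (z ⬝ᵥ R *ᵥ z)) v w = (R *ᵥ v) ⬝ᵥ w := by
  rw [fderiv_const_mul (differentiable_dotProduct_mulVec_self R v), _root_.smul_apply,
    fderiv_dotProduct_mulVec_self_apply, smul_eq_mul, dotProduct_mulVec, ← mulVec_transpose, hR,
    dotProduct_comm w]
  ring

end Quadratic

section CostToGo

variable {X U : Type*} {N : ℕ} (f : X → U → X) (ℓ Φ : X → ℝ) (u : Fin (N + 1) → U)

def tailTraj (j : ℕ) (y : X) : ℕ → X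
  | 0 => y
  | i + 1 => f (tailTraj j y i) (u (j + i : ℕ))

theorem tailTraj_succ_start (j : ℕ) (y : X) (i : ℕ) :
    tailTraj f u (j + 1) (f y (u j)) i = tailTraj f u j y (i + 1) := by
  induction i with
  | zero => rfl
  | succ i ih => rw [tailTraj, ih, Nat.add_right_comm, Nat.add_assoc]; rfl

theorem tailTraj_update_of_lt {k j : ℕ} (hkj : k < j) (z : U) (y : X) {i : ℕ}
    (hi : i ≤ N + 1 - j) :
    tailTraj f (Function.update u k z) j y i = tailTraj f u j y i := by
  induction i with
  | zero => rfl
  | succ i ih =>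
    have hne : ((j + i : ℕ) : Fin (N + 1)) ≠ k :=
      ((Fin.natCast_lt_natCast (by omega) (by omega)).mpr (by omega : k < j + i)).ne'
    rw [tailTraj, tailTraj, ih (by omega), Function.update_of_ne hne]

/-- The control penalty `½ u(k)ᵀ R u(k)` is left out: it does not depend on the state. -/
noncomputable def costToGo (j : ℕ) (y : X) : ℝ :=
  ∑ i ∈ Finset.range (N + 1 - j), ℓ (tailTraj f u j y i) + Φ (tailTraj f u j y (N + 1 - j))

theorem costToGo_last : costToGo f ℓ Φ u (N + 1) = Φ := by
  funext y
  simp [costToGo, tailTraj]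

theorem costToGo_eq_add {j : ℕ} (hj : j ≤ N) (y : X) :
    costToGo f ℓ Φ u j y = ℓ y + costToGo f ℓ Φ u (j + 1) (f y (u j)) := by
  rw [costToGo, costToGo, show N + 1 - j = N - j + 1 by omega,
    show N + 1 - (j + 1) = N - j by omega, Finset.sum_range_succ']
  simp only [tailTraj_succ_start]
  rw [tailTraj]
  ring

theorem costToGo_update_of_lt {k j : ℕ} (hkj : k < j) (z : U) :
    costToGo f ℓ Φ (Function.update u k z) j = costToGo f ℓ Φ u j := by
  funext y
  unfold costToGo
  rw [tailTraj_update_of_lt f u hkj z y le_rfl]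
  congr 1
  refine Finset.sum_congr rfl fun i hi => ?_
  rw [tailTraj_update_of_lt f u hkj z y (Finset.mem_range.mp hi).le]

variable [NormedAddCommGroup X] [NormedSpace ℝ X] {f ℓ Φ}

theorem differentiable_tailTraj (hf : ∀ v, Differentiable ℝ (f · v)) (j i : ℕ) :
    Differentiable ℝ (fun y => tailTraj f u j y i) := by
  induction i with
  | zero => exact differentiable_id
  | succ i ih => exact (hf _).comp ih

theorem differentiable_costToGo (hf : ∀ v, Differentiable ℝ (f · v))
    (hℓ : Differentiable ℝ ℓ) (hΦ : Differentiable ℝ Φ) (j : ℕ) :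
    Differentiable ℝ (costToGo f ℓ Φ u j) :=
  (Differentiable.fun_sum fun i _ => hℓ.comp (differentiable_tailTraj u hf j i)).add
    (hΦ.comp (differentiable_tailTraj u hf j _))

end CostToGo

section Trajectory

variable {p m N : ℕ} (f : (Fin p → ℝ) → (Fin m → ℝ) → Fin p → ℝ) (ℓ Φ : (Fin p → ℝ) → ℝ)
  (R : Matrix (Fin m) (Fin m) ℝ) (a : Fin p → ℝ) (u : Fin (N + 1) → Fin m → ℝ)

theorem traj_add (j i : ℕ) : traj f a u (j + i) = tailTraj f u j (traj f a u j) i := by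
  induction i with
  | zero => rfl
  | succ i ih => rw [← Nat.add_assoc, traj, ih]; rfl

theorem traj_update_of_le {k j : ℕ} (hk : k ≤ N) (hj : j ≤ k) (z : Fin m → ℝ) :
    traj f a (Function.update u k z) j = traj f a u j := by
  induction j with
  | zero => rfl
  | succ j ih =>
    have hne : (j : Fin (N + 1)) ≠ k :=
      ((Fin.natCast_lt_natCast (by omega) hk).mpr (by omega : j < k)).ne
    rw [traj, traj, ih (by omega), Function.update_of_ne hne]

theorem traj_update_succ {k : ℕ} (hk : k ≤ N) (z : Fin m → ℝ) :
    traj f a (Function.update u k z) (k + 1) = f (traj f a u k) z := by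
  rw [traj, traj_update_of_le f a u hk le_rfl, Function.update_self]

theorem cost_eq_add_costToGo {k : ℕ} (hk : k ≤ N) :
    cost f ℓ Φ R a u = (∑ j ∈ Finset.range (k + 1), ℓ (traj f a u j) +
      ∑ j : Fin (N + 1), (1 / 2) * (u j ⬝ᵥ R *ᵥ u j)) +
      costToGo f ℓ Φ u (k + 1) (traj f a u (k + 1)) := by
  have hstage : ∑ j ∈ Finset.range (N + 1), ℓ (traj f a u j) =
      ∑ j ∈ Finset.range (k + 1), ℓ (traj f a u j) +
        ∑ i ∈ Finset.range (N - k), ℓ (tailTraj f u (k + 1) (traj f a u (k + 1)) i) := by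
    simp only [← traj_add]
    rw [← Finset.sum_range_add, show k + 1 + (N - k) = N + 1 by omega]
  have hfinal : traj f a u (N + 1) = tailTraj f u (k + 1) (traj f a u (k + 1)) (N - k) := by
    rw [← traj_add, show k + 1 + (N - k) = N + 1 by omega]
  rw [cost, Finset.sum_add_distrib, hstage, hfinal, costToGo, Nat.add_sub_add_right,
    ← Fin.sum_univ_eq_sum_range (fun j => (1 / 2) * (u j ⬝ᵥ R *ᵥ u j))]
  simp only [Fin.cast_val_eq_self]
  ring

theorem cost_update_eq {k : ℕ} (hk : k ≤ N) (z : Fin m → ℝ) :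
    cost f ℓ Φ R a (Function.update u k z) = (∑ j ∈ Finset.range (k + 1), ℓ (traj f a u j) +
      ∑ j ∈ Finset.univ \ {(k : Fin (N + 1))}, (1 / 2) * (u j ⬝ᵥ R *ᵥ u j)) +
      ((1 / 2) * (z ⬝ᵥ R *ᵥ z) + costToGo f ℓ Φ u (k + 1) (f (traj f a u k) z)) := by
  rw [cost_eq_add_costToGo f ℓ Φ R a _ hk, traj_update_succ f a u hk,
    costToGo_update_of_lt f ℓ Φ u (Nat.lt_succ_self k)]
  have hstage : ∀ j ∈ Finset.range (k + 1),
      ℓ (traj f a (Function.update u k z) j) = ℓ (traj f a u j) := fun j hj => by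
    rw [traj_update_of_le f a u hk (Nat.lt_succ_iff.mp (Finset.mem_range.mp hj))]
  have hpenalty : ∀ j, (1 / 2 : ℝ) * (Function.update u k z j ⬝ᵥ R *ᵥ Function.update u k z j) =
      Function.update (fun i => (1 / 2 : ℝ) * (u i ⬝ᵥ R *ᵥ u i)) k ((1 / 2) * (z ⬝ᵥ R *ᵥ z)) j :=
    Function.apply_update (fun _ w => (1 / 2 : ℝ) * (w ⬝ᵥ R *ᵥ w)) u k z
  rw [Finset.sum_congr rfl hstage, Fintype.sum_congr _ _ hpenalty,
    Finset.sum_update_of_mem (Finset.mem_univ _)]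
  ring

end Trajectory

section Costate

variable {p m N : ℕ} {f : (Fin p → ℝ) → (Fin m → ℝ) → Fin p → ℝ} {ℓ Φ : (Fin p → ℝ) → ℝ}
  {a : Fin p → ℝ} {u : Fin (N + 1) → Fin m → ℝ}
  {fx : (Fin p → ℝ) → (Fin m → ℝ) → Matrix (Fin p) (Fin p) ℝ}
  {gl gΦ : (Fin p → ℝ) → Fin p → ℝ} {lam : ℕ → Fin p → ℝ}

theorem fderiv_costToGo_traj_apply (hf : ∀ v, Differentiable ℝ (f · v))
    (hℓ : Differentiable ℝ ℓ) (hΦ : Differentiable ℝ Φ)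
    (hfx : ∀ x u w, fderiv ℝ (fun y => f y u) x w = fx x u *ᵥ w)
    (hgl : ∀ x w, fderiv ℝ ℓ x w = gl x ⬝ᵥ w)
    (hgΦ : ∀ x w, fderiv ℝ Φ x w = gΦ x ⬝ᵥ w)
    (hlamT : lam (N + 1) = gΦ (traj f a u (N + 1)))
    (hlam : ∀ k : ℕ, 1 ≤ k → k ≤ N →
      lam k = gl (traj f a u k) + (fx (traj f a u k) (u k))ᵀ *ᵥ lam (k + 1))
    {j : ℕ} (hj : 1 ≤ j) (hjN : j ≤ N + 1) (w : Fin p → ℝ) :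
    fderiv ℝ (costToGo f ℓ Φ u j) (traj f a u j) w = lam j ⬝ᵥ w := by
  induction hjN using Nat.decreasingInduction generalizing w with
  | self => rw [costToGo_last, hgΦ, hlamT]
  | of_succ j hjlt ih =>
    have hbellman : costToGo f ℓ Φ u j =
        fun y => ℓ y + (costToGo f ℓ Φ u (j + 1) ∘ fun y => f y (u j)) y :=
      funext (costToGo_eq_add f ℓ Φ u (Nat.lt_succ_iff.mp hjlt))
    have hV := differentiable_costToGo u hf hℓ hΦ (j + 1)
    rw [hbellman, fderiv_fun_add (hℓ _) ((hV _).comp _ (hf _ _)), _root_.add_apply,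
      fderiv_comp _ (hV _) (hf _ _), ContinuousLinearMap.comp_apply, hgl, hfx]
    rw [show f (traj f a u j) (u j) = traj f a u (j + 1) from rfl, ih (by omega),
      hlam j hj (Nat.lt_succ_iff.mp hjlt), add_dotProduct, dotProduct_mulVec, ← mulVec_transpose]

end Costate

/-- Adjoint (costate) computation of the gradient of `J`: the partial gradient of `J`
with respect to the block `u(k)` equals `R u(k) + (∂f/∂u (x(k),u(k)))ᵀ λ(k+1)`. -/
theorem stmt11 {p m N : ℕ}
    (f : (Fin p → ℝ) → (Fin m → ℝ) → Fin p → ℝ)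
    (hf : ContDiff ℝ 1 (fun q : (Fin p → ℝ) × (Fin m → ℝ) => f q.1 q.2))
    (ℓ : (Fin p → ℝ) → ℝ) (hℓ : ContDiff ℝ 1 ℓ)
    (Φ : (Fin p → ℝ) → ℝ) (hΦ : ContDiff ℝ 1 Φ)
    (R : Matrix (Fin m) (Fin m) ℝ) (hR : Rᵀ = R)
    (a : Fin p → ℝ)
    (fx : (Fin p → ℝ) → (Fin m → ℝ) → Matrix (Fin p) (Fin p) ℝ)
    (hfx : ∀ x u w, fderiv ℝ (fun y => f y u) x w = fx x u *ᵥ w)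
    (fu : (Fin p → ℝ) → (Fin m → ℝ) → Matrix (Fin p) (Fin m) ℝ)
    (hfu : ∀ x u w, fderiv ℝ (fun z => f x z) u w = fu x u *ᵥ w)
    (gl : (Fin p → ℝ) → Fin p → ℝ)
    (hgl : ∀ x w, fderiv ℝ ℓ x w = gl x ⬝ᵥ w)
    (gΦ : (Fin p → ℝ) → Fin p → ℝ)
    (hgΦ : ∀ x w, fderiv ℝ Φ x w = gΦ x ⬝ᵥ w)
    (u : Fin (N + 1) → Fin m → ℝ)
    (lam : ℕ → Fin p → ℝ)
    (hlamT : lam (N + 1) = gΦ (traj f a u (N + 1)))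
    (hlam : ∀ k : ℕ, 1 ≤ k → k ≤ N →
      lam k = gl (traj f a u k) + (fx (traj f a u k) (u k))ᵀ *ᵥ lam (k + 1)) :
    ∀ k : ℕ, k ≤ N → ∀ w : Fin m → ℝ,
      fderiv ℝ (fun z => cost f ℓ Φ R a (Function.update u (k : Fin (N + 1)) z)) (u k) w
        = (R *ᵥ u k + (fu (traj f a u k) (u k))ᵀ *ᵥ lam (k + 1)) ⬝ᵥ w := by
  intro k hk w
  have hfx_diff : ∀ v, Differentiable ℝ (f · v) := fun v =>
    (hf.differentiable one_ne_zero).comp (differentiable_id.prodMk (differentiable_const v))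
  have hfu_diff : ∀ y, Differentiable ℝ (f y) := fun y =>
    (hf.differentiable one_ne_zero).comp ((differentiable_const y).prodMk differentiable_id)
  have hℓ' := hℓ.differentiable one_ne_zero
  have hΦ' := hΦ.differentiable one_ne_zero
  have hV := differentiable_costToGo u hfx_diff hℓ' hΦ' (k + 1)
  have hcostate := fderiv_costToGo_traj_apply hfx_diff hℓ' hΦ' hfx hgl hgΦ hlamT hlam
    (Nat.le_add_left 1 k) (Nat.succ_le_succ hk)
  have htail :
      DifferentiableAt ℝ (fun z => costToGo f ℓ Φ u (k + 1) (f (traj f a u k) z)) (u k) :=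
    (hV _).comp _ (hfu_diff _ _)
  have htail_deriv :
      fderiv ℝ (fun z => costToGo f ℓ Φ u (k + 1) (f (traj f a u k) z)) (u k) w =
      ((fu (traj f a u k) (u k))ᵀ *ᵥ lam (k + 1)) ⬝ᵥ w := by
    rw [fderiv_fun_comp _ (hV _) (hfu_diff _ _), ContinuousLinearMap.comp_apply, hfu]
    rw [show f (traj f a u k) (u k) = traj f a u (k + 1) from rfl, hcostate, dotProduct_mulVec,
      ← mulVec_transpose]
  rw [funext (cost_update_eq f ℓ Φ R a u hk), fderiv_const_add,
    fderiv_fun_add ((differentiable_dotProduct_mulVec_self R).const_mul _ _) htail,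
    _root_.add_apply, fderiv_half_dotProduct_mulVec_self_apply hR, htail_deriv,
    add_dotProduct]
end

section
/- Let f : ℝᵖ × ℝᵐ → ℝᵖ be continuously differentiable, ℓ : ℝᵖ → ℝ and Φ : ℝᵖ → ℝ continuously differentiable, R a symmetric m×m real matrix, a ∈ ℝᵖ, and N a natural number. For a control sequence u = (u(0),…,u(N)) ∈ (ℝᵐ)^{N+1}, define the state trajectory by x(0) = a and x(k+1) = f(x(k),u(k)) for 0 ≤ k ≤ N, and the cost J(u) = Σ_{k=0}^{N} ( ℓ(x(k)) + ½ u(k)ᵀ R u(k) ) + Φ(x(N+1)). If u* is a local minimizer of J, then with the costate defined backward by λ(N+1) = ∇Φ(x*(N+1)) and λ(k) = ∇ℓ(x*(k)) + (∂f/∂x (x*(k),u*(k)))ᵀ λ(k+1), where x* is the trajectory generated by u*, one has 0 = R u*(k) + (∂f/∂u (x*(k),u*(k)))ᵀ λ(k+1) for every 0 ≤ k ≤ N. -/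
/-!
Perturb the controls along a direction `h`. The cost then has directional derivative
`Σ_k (∇ℓ(x_k)·δ_k + R u_k·h_k) + ∇Φ(x_{N+1})·δ_{N+1}`, where `δ` is the linearised trajectory
`δ_0 = 0`, `δ_{k+1} = f_x δ_k + f_u h_k`. Summation by parts against the costate recursion
`λ_k = ∇ℓ(x_k) + f_xᵀ λ_{k+1}` rewrites it as `Σ_k (R u_k + f_uᵀ λ_{k+1})·h_k`, which vanishes at a
local minimum for every `h`. Concentrating `h` at step `j`, with value the `j`-th summand, forces
that summand to be zero.
-/

open Matrix
open Fin.NatCast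

open Finset

theorem DifferentiableAt.fderiv_apply_prodMk_eq_add {E F G : Type*}
    [NormedAddCommGroup E] [NormedSpace ℝ E] [NormedAddCommGroup F] [NormedSpace ℝ F]
    [NormedAddCommGroup G] [NormedSpace ℝ G] {f : E → F → G} {a : E} {b : F}
    (hf : DifferentiableAt ℝ (fun q : E × F => f q.1 q.2) (a, b)) (w : E) (z : F) :
    fderiv ℝ (fun q : E × F => f q.1 q.2) (a, b) (w, z) =
      fderiv ℝ (fun x => f x b) a w + fderiv ℝ (fun y => f a y) b z := by
  have hx := hf.hasFDerivAt.comp a (hasFDerivAt_prodMk_left (𝕜 := ℝ) a b)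
  have hy := hf.hasFDerivAt.comp b (hasFDerivAt_prodMk_right (𝕜 := ℝ) a b)
  rw [HasFDerivAt.fderiv (f := fun x => f x b) hx, HasFDerivAt.fderiv (f := fun y => f a y) hy,
    ContinuousLinearMap.comp_apply, ContinuousLinearMap.comp_apply, ← map_add,
    ContinuousLinearMap.inl_apply, ContinuousLinearMap.inr_apply, Prod.mk_add_mk,
    add_zero, zero_add]

theorem HasFDerivAt.comp_hasLineDerivAt {E F G : Type*}
    [NormedAddCommGroup E] [NormedSpace ℝ E] [NormedAddCommGroup F] [NormedSpace ℝ F]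
    [NormedAddCommGroup G] [NormedSpace ℝ G] {g : F → G} {g' : F →L[ℝ] G} {φ : E → F}
    {φ' : F} {x v : E} (hg : HasFDerivAt g g' (φ x)) (hφ : HasLineDerivAt ℝ φ φ' x v) :
    HasLineDerivAt ℝ (g ∘ φ) (g' φ') x v :=
  hg.comp_hasDerivAt_of_eq (0 : ℝ) hφ (by simp)

theorem hasLineDerivAt_half_dotProduct_mulVec {ι : Type*} [Fintype ι]
    {R : Matrix ι ι ℝ} (hR : Rᵀ = R) (c d : ι → ℝ) :
    HasLineDerivAt ℝ (fun x => (1 / 2 : ℝ) * (x ⬝ᵥ R *ᵥ x)) ((R *ᵥ c) ⬝ᵥ d) c d := by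
  have hsymm : c ⬝ᵥ R *ᵥ d = (R *ᵥ c) ⬝ᵥ d := by
    rw [dotProduct_mulVec, ← mulVec_transpose, hR]
  have hexpand : (fun t : ℝ => (1 / 2 : ℝ) * ((c + t • d) ⬝ᵥ R *ᵥ (c + t • d))) = fun t =>
      (1 / 2) * (c ⬝ᵥ R *ᵥ c) + ((R *ᵥ c) ⬝ᵥ d) * t + (1 / 2) * (d ⬝ᵥ R *ᵥ d) * t ^ 2 := by
    funext t
    simp only [mulVec_add, mulVec_smul, dotProduct_add, add_dotProduct, dotProduct_smul,
      smul_dotProduct, smul_eq_mul, hsymm, dotProduct_comm d (R *ᵥ c)]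
    ring
  unfold HasLineDerivAt
  rw [hexpand]
  convert (((hasDerivAt_id' (0 : ℝ)).const_mul ((R *ᵥ c) ⬝ᵥ d)).const_add
    ((1 / 2 : ℝ) * (c ⬝ᵥ R *ᵥ c))).fun_add
    ((hasDerivAt_pow 2 (0 : ℝ)).const_mul ((1 / 2 : ℝ) * (d ⬝ᵥ R *ᵥ d))) using 1
  simp

/-- Discrete adjoint identity: summation by parts against the costate recursion for `μ`. -/
theorem sum_dotProduct_add_dotProduct_eq_sum {ι : Type*} [Fintype ι]
    (A : ℕ → Matrix ι ι ℝ) (b g δ μ : ℕ → ι → ℝ) (n : ℕ) (hδ₀ : δ 0 = 0)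
    (hδ : ∀ k ≤ n, δ (k + 1) = A k *ᵥ δ k + b k)
    (hμ : ∀ k, 1 ≤ k → k ≤ n → μ k = g k + (A k)ᵀ *ᵥ μ (k + 1)) :
    ∑ k ∈ range (n + 1), g k ⬝ᵥ δ k + μ (n + 1) ⬝ᵥ δ (n + 1) =
      ∑ k ∈ range (n + 1), μ (k + 1) ⬝ᵥ b k := by
  induction n with
  | zero => simp [hδ₀, hδ 0 le_rfl]
  | succ n ih =>
    have hstep : μ (n + 1) ⬝ᵥ δ (n + 1) + μ (n + 2) ⬝ᵥ b (n + 1) =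
        g (n + 1) ⬝ᵥ δ (n + 1) + μ (n + 2) ⬝ᵥ δ (n + 2) := by
      rw [hμ (n + 1) le_add_self le_rfl, hδ (n + 1) le_rfl, add_dotProduct, dotProduct_add,
        mulVec_transpose, ← dotProduct_mulVec]
      ring
    have ih' := ih (fun k hk => hδ k (by omega)) (fun k hk hkn => hμ k hk (by omega))
    simp only [sum_range_succ _ (n + 1)]
    linarith

theorem sum_range_dotProduct_pi_single {ι : Type*} [Fintype ι] {N j : ℕ} (hj : j ≤ N)
    (w : ℕ → ι → ℝ) (v : ι → ℝ) :
    ∑ k ∈ range (N + 1), w k ⬝ᵥ (Pi.single (j : Fin (N + 1)) v : Fin (N + 1) → ι → ℝ) k =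
      w j ⬝ᵥ v := by
  rw [sum_eq_single j]
  · simp
  · intro k hk hkj
    rw [Pi.single_eq_of_ne, dotProduct_zero]
    intro hcast
    have hval := congrArg Fin.val hcast
    rw [Fin.val_cast_of_lt (Nat.lt_succ_of_le hj),
      Fin.val_cast_of_lt (mem_range.1 hk)] at hval
    exact hkj hval
  · intro hj'
    exact absurd (mem_range.2 (Nat.lt_succ_of_le hj)) hj'

noncomputable def trajLineDeriv {p m N : ℕ} (f : (Fin p → ℝ) → (Fin m → ℝ) → Fin p → ℝ)
    (a : Fin p → ℝ) (u h : Fin (N + 1) → Fin m → ℝ) : ℕ → Fin p → ℝ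
  | 0 => 0
  | k + 1 => fderiv ℝ (fun y => f y (u k)) (traj f a u k) (trajLineDeriv f a u h k)
      + fderiv ℝ (fun z => f (traj f a u k) z) (u k) (h k)

section Trajectory

variable {p m N : ℕ} {f : (Fin p → ℝ) → (Fin m → ℝ) → Fin p → ℝ}

theorem hasLineDerivAt_traj
    (hf : Differentiable ℝ (fun q : (Fin p → ℝ) × (Fin m → ℝ) => f q.1 q.2))
    (a : Fin p → ℝ) (u h : Fin (N + 1) → Fin m → ℝ) (k : ℕ) :
    HasLineDerivAt ℝ (fun v => traj f a v k) (trajLineDeriv f a u h k) u h := by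
  induction k with
  | zero => exact hasDerivAt_const (0 : ℝ) a
  | succ k ih =>
    have hcontrol : HasDerivAt (fun t : ℝ => (u + t • h) k) (h k) 0 := by
      simpa using ((hasDerivAt_id' (0 : ℝ)).smul_const (h k)).const_add (u k)
    have hstep := (hf (traj f a u k, u k)).hasFDerivAt.comp_hasDerivAt_of_eq (0 : ℝ)
      (HasDerivAt.prodMk ih hcontrol) (by simp)
    rwa [(hf _).fderiv_apply_prodMk_eq_add] at hstep

theorem hasLineDerivAt_cost {ℓ Φ : (Fin p → ℝ) → ℝ} {R : Matrix (Fin m) (Fin m) ℝ}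
    (hf : Differentiable ℝ (fun q : (Fin p → ℝ) × (Fin m → ℝ) => f q.1 q.2))
    (hℓ : Differentiable ℝ ℓ) (hΦ : Differentiable ℝ Φ) (hR : Rᵀ = R)
    (a : Fin p → ℝ) (u h : Fin (N + 1) → Fin m → ℝ) :
    HasLineDerivAt ℝ (cost f ℓ Φ R a)
      (∑ k ∈ range (N + 1), (fderiv ℝ ℓ (traj f a u k) (trajLineDeriv f a u h k)
          + (R *ᵥ u k) ⬝ᵥ h k)
        + fderiv ℝ Φ (traj f a u (N + 1)) (trajLineDeriv f a u h (N + 1))) u h := by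
  have hstage : ∀ k ∈ range (N + 1), HasLineDerivAt ℝ
      (fun v => ℓ (traj f a v k) + (1 / 2) * (v k ⬝ᵥ R *ᵥ v k))
      (fderiv ℝ ℓ (traj f a u k) (trajLineDeriv f a u h k) + (R *ᵥ u k) ⬝ᵥ h k) u h :=
    fun k _ => HasDerivAt.add
      ((hℓ _).hasFDerivAt.comp_hasLineDerivAt (hasLineDerivAt_traj hf a u h k))
      (hasLineDerivAt_half_dotProduct_mulVec hR (u k) (h k))
  exact HasDerivAt.add (HasDerivAt.fun_sum hstage)
    ((hΦ _).hasFDerivAt.comp_hasLineDerivAt (hasLineDerivAt_traj hf a u h (N + 1)))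

end Trajectory

/-- Discrete-time Pontryagin stationarity: if `u*` is a local minimizer of `J`, then
with the costate defined backward from the trajectory `x*` generated by `u*`,
`0 = R u*(k) + (∂f/∂u (x*(k),u*(k)))ᵀ λ(k+1)` for every `0 ≤ k ≤ N`. -/
theorem stmt12 {p m N : ℕ}
    (f : (Fin p → ℝ) → (Fin m → ℝ) → Fin p → ℝ)
    (hf : ContDiff ℝ 1 (fun q : (Fin p → ℝ) × (Fin m → ℝ) => f q.1 q.2))
    (ℓ : (Fin p → ℝ) → ℝ) (hℓ : ContDiff ℝ 1 ℓ)
    (Φ : (Fin p → ℝ) → ℝ) (hΦ : ContDiff ℝ 1 Φ)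
    (R : Matrix (Fin m) (Fin m) ℝ) (hR : Rᵀ = R)
    (a : Fin p → ℝ)
    (fx : (Fin p → ℝ) → (Fin m → ℝ) → Matrix (Fin p) (Fin p) ℝ)
    (hfx : ∀ x u w, fderiv ℝ (fun y => f y u) x w = fx x u *ᵥ w)
    (fu : (Fin p → ℝ) → (Fin m → ℝ) → Matrix (Fin p) (Fin m) ℝ)
    (hfu : ∀ x u w, fderiv ℝ (fun z => f x z) u w = fu x u *ᵥ w)
    (gl : (Fin p → ℝ) → Fin p → ℝ)
    (hgl : ∀ x w, fderiv ℝ ℓ x w = gl x ⬝ᵥ w)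
    (gΦ : (Fin p → ℝ) → Fin p → ℝ)
    (hgΦ : ∀ x w, fderiv ℝ Φ x w = gΦ x ⬝ᵥ w)
    (ustar : Fin (N + 1) → Fin m → ℝ)
    (hmin : IsLocalMin (cost f ℓ Φ R a) ustar)
    (lam : ℕ → Fin p → ℝ)
    (hlamT : lam (N + 1) = gΦ (traj f a ustar (N + 1)))
    (hlam : ∀ k : ℕ, 1 ≤ k → k ≤ N →
      lam k = gl (traj f a ustar k)
        + (fx (traj f a ustar k) (ustar k))ᵀ *ᵥ lam (k + 1)) :
    ∀ k : ℕ, k ≤ N →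
      0 = R *ᵥ ustar k + (fu (traj f a ustar k) (ustar k))ᵀ *ᵥ lam (k + 1) := by
  intro j hj
  have hfd : Differentiable ℝ (fun q : (Fin p → ℝ) × (Fin m → ℝ) => f q.1 q.2) :=
    hf.differentiable one_ne_zero
  have hgrad : ∀ h : Fin (N + 1) → Fin m → ℝ, ∑ k ∈ range (N + 1),
      (R *ᵥ ustar k + (fu (traj f a ustar k) (ustar k))ᵀ *ᵥ lam (k + 1)) ⬝ᵥ h k = 0 := by
    intro h
    have hstat := hmin.hasLineDerivAt_eq_zero (hasLineDerivAt_cost hfd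
      (hℓ.differentiable one_ne_zero) (hΦ.differentiable one_ne_zero) hR a ustar h)
    have hadj := sum_dotProduct_add_dotProduct_eq_sum (fun k => fx (traj f a ustar k) (ustar k))
      (fun k => fu (traj f a ustar k) (ustar k) *ᵥ h k) (fun k => gl (traj f a ustar k))
      (trajLineDeriv f a ustar h) lam N rfl
      (fun k _ => by simp only [trajLineDeriv, hfx, hfu]) hlam
    simp only [hgl, hgΦ, ← hlamT, sum_add_distrib] at hstat
    simp only [add_dotProduct, sum_add_distrib, mulVec_transpose, ← dotProduct_mulVec]
    linarith
  have hv := hgrad (Pi.single (j : Fin (N + 1))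
    (R *ᵥ ustar j + (fu (traj f a ustar j) (ustar j))ᵀ *ᵥ lam (j + 1)))
  rw [sum_range_dotProduct_pi_single hj] at hv
  exact (dotProduct_self_eq_zero.1 hv).symm
end
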